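/- Let q be a power of 2, n | q−1, and α ∈ F_q a primitive n-th root of unity. Let D be a nonzero cyclic code of length n over F_q with complete defining set Z(D), and let m be a positive divisor of n. Assume there exist integers l and t such that (i) the coset α^l G_m is disjoint from Z(D), and (ii) α^{s+l+tm} ∈ Z(D) for all s = 1, 2, …, m−1. Then the minimum distance of D equals exactly m. -/

import Mathlib

/-!
The upper bound comes from an explicit codeword: with `n = m * u`, the word equal to
`α^{-lj}` at the multiples `j` of `u` and `0` elsewhere has weight `m`, and its value at an
`n`-th root of unity `β` is a geometric sum of `m` terms with ratio `(α^{-l} β)^u`, which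
vanishes unless `β ∈ α^l G_m`. So it vanishes on `Z(D)`, and it lies in `D` because a cyclic
code contains every word vanishing on its defining set. The lower bound is the BCH bound for
the `m - 1` consecutive zeros `α^{l+tm+1}, …, α^{l+tm+m-1}`.
-/

open scoped BigOperators

namespace LRC

/-- Hamming weight of a vector. -/
noncomputable def hwt {n : ℕ} {F : Type*} [Zero F] (c : Fin n → F) : ℕ :=
  Nat.card {i : Fin n // c i ≠ 0}

/-- A linear code is cyclic if it is closed under the cyclic shift of coordinates. -/
def IsCyclicCode {n : ℕ} [NeZero n] {F : Type*} [Field F] (C : Submodule F (Fin n → F)) : Prop :=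
  ∀ c ∈ C, (fun i : Fin n => c (i - 1)) ∈ C

/-- `A` is a recovery set for coordinate `i` of the code `C`. -/
def IsRecoverySet {n : ℕ} {F : Type*} [Field F] (C : Submodule F (Fin n → F)) (i : Fin n)
    (A : Finset (Fin n)) : Prop :=
  i ∉ A ∧ ∃ φ : ((j : A) → F) → F, ∀ c ∈ C, c i = φ (fun j => c j)

/-- The code `C` has locality `r`. -/
def HasLocality {n : ℕ} {F : Type*} [Field F] (C : Submodule F (Fin n → F)) (r : ℕ) : Prop :=
  ∀ i : Fin n, ∃ A : Finset (Fin n), A.card ≤ r ∧ IsRecoverySet C i A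

/-- Complete defining set of zeros of a cyclic code (locator field = symbol field). -/
def definingSet {n : ℕ} {F : Type*} [Field F] (C : Submodule F (Fin n → F)) : Set F :=
  {β | β ^ n = 1 ∧ ∀ c ∈ C, ∑ j : Fin n, c j * β ^ (j : ℕ) = 0}

/-- Complete defining set of zeros of a cyclic code in an extension (locator) field `K`. -/
def definingSetExt (n : ℕ) {F K : Type*} [Field F] [Field K] [Algebra F K]
    (C : Submodule F (Fin n → F)) : Set K :=
  {β | β ^ n = 1 ∧ ∀ c ∈ C, ∑ j : Fin n, algebraMap F K (c j) * β ^ (j : ℕ) = 0}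

/-- The cyclic code with a given set of zeros. -/
def codeOfZeros (n : ℕ) {F : Type*} [Field F] (Z : Set F) : Submodule F (Fin n → F) where
  carrier := {c | ∀ β ∈ Z, ∑ j : Fin n, c j * β ^ (j : ℕ) = 0}
  add_mem' := by
    intro a b ha hb β hβ
    have h1 := ha β hβ
    have h2 := hb β hβ
    calc ∑ j : Fin n, (a + b) j * β ^ (j : ℕ)
        = (∑ j : Fin n, a j * β ^ (j : ℕ)) + ∑ j : Fin n, b j * β ^ (j : ℕ) := by
          rw [← Finset.sum_add_distrib]
          exact Finset.sum_congr rfl (by intro j _; simp [add_mul])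
      _ = 0 := by rw [h1, h2, add_zero]
  zero_mem' := by intro β hβ; simp
  smul_mem' := by
    intro t a ha β hβ
    have h1 := ha β hβ
    calc ∑ j : Fin n, (t • a) j * β ^ (j : ℕ)
        = t * ∑ j : Fin n, a j * β ^ (j : ℕ) := by
          rw [Finset.mul_sum]
          exact Finset.sum_congr rfl (by intro j _; simp [mul_assoc])
      _ = 0 := by rw [h1, mul_zero]

/-- Minimum distance: least Hamming weight of a nonzero codeword. -/
noncomputable def minDist {n : ℕ} {F : Type*} [Field F] (C : Submodule F (Fin n → F)) : ℕ :=
  sInf {w | ∃ c ∈ C, c ≠ 0 ∧ hwt c = w}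

/-- The dual code under the standard bilinear form. -/
def dualCode {n : ℕ} {F : Type*} [Field F] (C : Submodule F (Fin n → F)) :
    Submodule F (Fin n → F) where
  carrier := {y | ∀ c ∈ C, ∑ i : Fin n, c i * y i = 0}
  add_mem' := by
    intro a b ha hb c hc
    have h1 := ha c hc
    have h2 := hb c hc
    calc ∑ i : Fin n, c i * (a + b) i
        = (∑ i : Fin n, c i * a i) + ∑ i : Fin n, c i * b i := by
          rw [← Finset.sum_add_distrib]
          exact Finset.sum_congr rfl (by intro j _; simp [mul_add])
      _ = 0 := by rw [h1, h2, add_zero]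
  zero_mem' := by intro c hc; simp
  smul_mem' := by
    intro t a ha c hc
    have h1 := ha c hc
    calc ∑ i : Fin n, c i * (t • a) i
        = t * ∑ i : Fin n, c i * a i := by
          rw [Finset.mul_sum]
          exact Finset.sum_congr rfl (by intro j _; simp [mul_assoc]; ring)
      _ = 0 := by rw [h1, mul_zero]



/-- The coset `α^l G_m` of the subgroup `G_m = {α^{jm}}` of the n-th roots of unity. -/
def coset {F : Type*} [Field F] (α : F) (n : ℕ) (l : ℤ) (m : ℕ) : Set F :=
  {β | ∃ j : ℕ, j < n / m ∧ β = α ^ (l + (j : ℤ) * m)}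

section CyclicCodes

open Finset Polynomial
open scoped Matrix

variable {F : Type*} [Field F]

def evalWord {n : ℕ} (c : Fin n → F) (β : F) : F :=
  ∑ j : Fin n, c j * β ^ (j : ℕ)

lemma mem_definingSet {n : ℕ} {C : Submodule F (Fin n → F)} {β : F} :
    β ∈ definingSet C ↔ β ^ n = 1 ∧ ∀ c ∈ C, evalWord c β = 0 :=
  Iff.rfl

lemma mem_codeOfZeros {n : ℕ} {Z : Set F} {c : Fin n → F} :
    c ∈ codeOfZeros n Z ↔ ∀ β ∈ Z, evalWord c β = 0 :=
  Iff.rfl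

open scoped Classical in
lemma hwt_eq_card_filter {n : ℕ} (c : Fin n → F) : hwt c = #{i | c i ≠ 0} := by
  rw [hwt, Nat.card_eq_fintype_card, Fintype.card_subtype]

lemma minDist_eq_of_forall_le_hwt {n d : ℕ} {C : Submodule F (Fin n → F)} {c : Fin n → F}
    (hc : c ∈ C) (hwc : hwt c = d) (hd : 0 < d) (hle : ∀ c ∈ C, c ≠ 0 → d ≤ hwt c) :
    minDist C = d := by
  have hc0 : c ≠ 0 := by
    rintro rfl
    simp [hwt] at hwc
    omega
  exact le_antisymm (Nat.sInf_le ⟨c, hc, hc0, hwc⟩)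
    (le_csInf ⟨d, c, hc, hc0, hwc⟩ fun _ ⟨c', hc', hc'0, hw⟩ => hw ▸ hle c' hc' hc'0)

open scoped Classical in
lemma eq_zero_of_sum_mul_pow_eq_zero {ι : Type*} [Fintype ι] {x : ι → F}
    (hx : Function.Injective x) {a : ι → F}
    (h : ∀ s < #{i | a i ≠ 0}, ∑ i, a i * x i ^ s = 0) : a = 0 := by
  set S : Finset ι := {i | a i ≠ 0}
  let e : Fin #S ≃ S := S.equivFin.symm
  have hzero : (fun k => a (e k)) = 0 := by
    refine Matrix.eq_zero_of_forall_pow_sum_mul_pow_eq_zero (f := fun k => x (e k))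
      (fun k k' hkk' => e.injective (Subtype.ext (hx hkk'))) fun s => ?_
    have hsupp : ∑ i ∈ S, a i * x i ^ (s : ℕ) = ∑ i, a i * x i ^ (s : ℕ) :=
      sum_subset S.subset_univ fun i _ hi => by
        rw [show a i = 0 by simpa [S] using hi, zero_mul]
    rw [← h s s.isLt, ← hsupp, ← sum_coe_sort S]
    exact e.sum_comp fun i : S => a i * x i ^ (s : ℕ)
  funext i
  by_contra hi
  have hiS : i ∈ S := by simpa [S] using hi
  exact hi (by simpa using congrFun hzero (e.symm ⟨i, hiS⟩))

/-- The BCH bound. -/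
lemma lt_hwt_of_evalWord_eq_zero {n k : ℕ} {α γ : F} (hα : IsPrimitiveRoot α n) (hγ : γ ≠ 0)
    {c : Fin n → F} (hc : c ≠ 0) (h : ∀ s < k, evalWord c (γ * α ^ s) = 0) : k < hwt c := by
  classical
  by_contra! hle
  apply hc
  have hsupp : #{i | c i * γ ^ (i : ℕ) ≠ 0} = hwt c := by
    simp [hwt_eq_card_filter, hγ]
  have hzero := eq_zero_of_sum_mul_pow_eq_zero (x := fun i : Fin n => α ^ (i : ℕ))
    (fun i j hij => Fin.ext (hα.pow_inj i.isLt j.isLt hij)) (a := fun i => c i * γ ^ (i : ℕ))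
    fun s hs => by
      rw [← h s ((hsupp ▸ hs).trans_le hle), evalWord]
      exact sum_congr rfl fun i _ => by ring
  funext i
  simpa [hγ] using congrFun hzero i

section DiagonalInvariant

variable {ι : Type*} {W : Submodule F (ι → F)} {d : ι → F}

lemma eval_mul_mem_of_mul_mem (hW : ∀ y ∈ W, (fun i => d i * y i) ∈ W) (p : F[X])
    {y : ι → F} (hy : y ∈ W) : (fun i => p.eval (d i) * y i) ∈ W := by
  induction p using Polynomial.induction_on with
  | C a => simpa [Pi.smul_def] using W.smul_mem a hy
  | add p q hp hq => simpa only [eval_add, add_mul, Pi.add_def] using W.add_mem hp hq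
  | monomial k a h => simpa [pow_succ, mul_assoc, mul_left_comm] using hW _ h

lemma mem_of_mul_mem_of_injective [Fintype ι] [DecidableEq ι] (hd : Function.Injective d)
    (hW : ∀ y ∈ W, (fun i => d i * y i) ∈ W) {v : ι → F}
    (hv : ∀ i, (∀ y ∈ W, y i = 0) → v i = 0) : v ∈ W := by
  rw [← univ_sum_single v]
  refine W.sum_mem fun i _ => ?_
  by_cases hvi : v i = 0
  · simp [hvi]
  obtain ⟨y, hy, hyi⟩ : ∃ y ∈ W, y i ≠ 0 := by
    by_contra! h
    exact hvi (hv i h)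
  -- the Lagrange basis polynomial at the distinct nodes `d j` cuts `y` down to its `i`-th entry
  have hsingle : Pi.single i (v i) = (v i / y i) •
      fun j => (Lagrange.basis univ d i).eval (d j) * y j := by
    funext j
    rcases eq_or_ne j i with rfl | hji
    · simp [Lagrange.eval_basis_self hd.injOn (mem_univ j), hyi]
    · simp [Lagrange.eval_basis_of_ne hji.symm (mem_univ j), hji]
  rw [hsingle]
  exact W.smul_mem _ (eval_mul_mem_of_mul_mem hW _ hy)

end DiagonalInvariant

section CyclicCode

variable {n : ℕ}

lemma evalWord_shift [NeZero n] {ζ : F} (hζ : ζ ^ n = 1) (c : Fin n → F) :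
    evalWord (fun i : Fin n => c (i - 1)) ζ = ζ * evalWord c ζ := by
  rw [evalWord, evalWord, mul_sum, ← Equiv.sum_comp (Equiv.addRight (1 : Fin n))]
  refine sum_congr rfl fun i _ => ?_
  rw [Equiv.coe_addRight, add_sub_cancel_right, Fin.val_add, Fin.val_one', Nat.add_mod_mod,
    ← pow_eq_pow_mod _ hζ, pow_succ]
  ring

lemma mulVec_vandermonde (x c : Fin n → F) (k : Fin n) :
    (Matrix.vandermonde x *ᵥ c) k = evalWord c (x k) := by
  simp only [Matrix.mulVec, dotProduct, Matrix.vandermonde_apply, evalWord, mul_comm]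

/-- Evaluation at the powers `α^k` is an injective Vandermonde map turning the cyclic shift into
multiplication by the distinct `α^k`, so it maps `D` onto a coordinate subspace. -/
lemma IsCyclicCode.codeOfZeros_definingSet [NeZero n] {D : Submodule F (Fin n → F)}
    (hD : IsCyclicCode D) {α : F} (hα : IsPrimitiveRoot α n) :
    codeOfZeros n (definingSet D) = D := by
  refine le_antisymm (fun c hc => ?_) fun c hc β hβ => (mem_definingSet.mp hβ).2 c hc
  set x : Fin n → F := fun k => α ^ (k : ℕ)
  have hx : Function.Injective x := fun i j hij => Fin.ext (hα.pow_inj i.isLt j.isLt hij)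
  have hxn : ∀ k, x k ^ n = 1 := fun k => by
    rw [← pow_mul, mul_comm, pow_mul, hα.pow_eq_one, one_pow]
  let E := (Matrix.vandermonde x).mulVecLin
  have hE : Function.Injective E := Matrix.mulVec_injective_iff_isUnit.mpr <|
    (Matrix.isUnit_iff_isUnit_det _).mpr (Matrix.det_vandermonde_ne_zero_iff.mpr hx).isUnit
  have hstable : ∀ y ∈ D.map E, (fun k => x k * y k) ∈ D.map E := by
    rintro _ ⟨c, hcD, rfl⟩
    refine ⟨_, hD c hcD, funext fun k => ?_⟩
    simp only [E, Matrix.mulVecLin_apply, mulVec_vandermonde, evalWord_shift (hxn k)]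
  obtain ⟨c', hc'D, hc'⟩ : E c ∈ D.map E := by
    refine mem_of_mul_mem_of_injective hx hstable fun k hk => ?_
    simp only [E, Matrix.mulVecLin_apply, mulVec_vandermonde]
    refine mem_codeOfZeros.mp hc (x k) (mem_definingSet.mpr ⟨hxn k, fun c hcD => ?_⟩)
    simpa only [E, Matrix.mulVecLin_apply, mulVec_vandermonde] using hk _ ⟨c, hcD, rfl⟩
  exact hE hc' ▸ hc'D

end CyclicCode

lemma sum_range_mul_ite_dvd {M : Type*} [AddCommMonoid M] {u : ℕ} (hu : 0 < u) (m : ℕ)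
    (f : ℕ → M) :
    ∑ j ∈ range (m * u), (if u ∣ j then f j else 0) = ∑ i ∈ range m, f (u * i) := by
  have himage : {j ∈ range (m * u) | u ∣ j} = (range m).image (u * ·) := by
    ext j
    simp only [mem_filter, mem_range, mem_image]
    constructor
    · rintro ⟨hj, i, rfl⟩
      exact ⟨i, Nat.lt_of_mul_lt_mul_left (a := u) (by rwa [mul_comm m] at hj), rfl⟩
    · rintro ⟨i, hi, rfl⟩
      exact ⟨by nlinarith, dvd_mul_right u i⟩
  rw [← sum_filter, himage, sum_image fun a _ b _ h => Nat.eq_of_mul_eq_mul_left hu h]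

section MultiplesWord

def multiplesWord (n u : ℕ) (ζ : F) : Fin n → F :=
  fun j => if u ∣ (j : ℕ) then ζ ^ (j : ℕ) else 0

variable {n m u : ℕ} {ζ : F}

lemma evalWord_multiplesWord (hn : n = m * u) (hu : 0 < u) (β : F) :
    evalWord (multiplesWord n u ζ) β = ∑ i ∈ range m, ((ζ * β) ^ u) ^ i := by
  have hterm : ∀ j : ℕ, (if u ∣ j then ζ ^ j else 0) * β ^ j =
      if u ∣ j then (ζ * β) ^ j else 0 := fun j => by split_ifs <;> simp [mul_pow]
  simp only [evalWord, multiplesWord, hterm]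
  rw [Fin.sum_univ_eq_sum_range (fun j => if u ∣ j then (ζ * β) ^ j else 0), hn,
    sum_range_mul_ite_dvd hu]
  simp only [pow_mul]

lemma hwt_multiplesWord (hn : n = m * u) (hu : 0 < u) (hζ : ζ ≠ 0) :
    hwt (multiplesWord n u ζ) = m := by
  have hsupp : ∀ j : Fin n, multiplesWord n u ζ j ≠ 0 ↔ u ∣ (j : ℕ) := fun j => by
    simp [multiplesWord, hζ]
  rw [hwt_eq_card_filter, card_filter]
  simp only [hsupp]
  rw [Fin.sum_univ_eq_sum_range (fun j => if u ∣ j then 1 else 0), hn, sum_range_mul_ite_dvd hu,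
    sum_const, card_range, smul_eq_mul, mul_one]

lemma evalWord_multiplesWord_eq_zero (hn : n = m * u) (hu : 0 < u) {β : F}
    (hβ : (ζ * β) ^ n = 1) (hne : (ζ * β) ^ u ≠ 1) : evalWord (multiplesWord n u ζ) β = 0 := by
  rw [evalWord_multiplesWord hn hu, geom_sum_eq hne, ← pow_mul, mul_comm u, ← hn, hβ, sub_self,
    zero_div]

end MultiplesWord

section Coset

variable {n m u : ℕ} {α β : F}

lemma zpow_inv_mul_pow_eq_one (hα : α ^ n = 1) (hβ : β ^ n = 1) (l : ℤ) :
    ((α ^ l)⁻¹ * β) ^ n = 1 := by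
  rw [mul_pow, inv_pow, ← zpow_natCast (α ^ l), ← zpow_mul, mul_comm l, zpow_mul, zpow_natCast,
    hα, one_zpow, inv_one, one_mul, hβ]

lemma mem_coset_of_pow_eq_one [NeZero n] (hα : IsPrimitiveRoot α n) (hn : n = m * u)
    (hβ : β ^ n = 1) {l : ℤ} (h : ((α ^ l)⁻¹ * β) ^ u = 1) : β ∈ coset α n l m := by
  obtain ⟨hm, hu⟩ := CanonicallyOrderedAdd.mul_pos.mp (hn ▸ NeZero.pos n)
  have hα0 : α ≠ 0 := hα.ne_zero (NeZero.ne n)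
  obtain ⟨k, hk, hαk⟩ := hα.eq_pow_of_pow_eq_one (zpow_inv_mul_pow_eq_one hα.pow_eq_one hβ l)
  obtain ⟨j, rfl⟩ : m ∣ k := by
    rw [← hαk, ← pow_mul, hα.pow_eq_one_iff_dvd, hn] at h
    exact Nat.dvd_of_mul_dvd_mul_right hu h
  refine ⟨j, ?_, ?_⟩
  · rw [hn, Nat.mul_div_cancel_left u hm]
    exact Nat.lt_of_mul_lt_mul_left (hn ▸ hk)
  · rw [zpow_add₀ hα0, ← Nat.cast_mul, zpow_natCast, mul_comm j, hαk,
      mul_inv_cancel_left₀ (zpow_ne_zero l hα0)]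

end Coset

end CyclicCodes

theorem stmt14_general {F : Type*} [Field F] (n : ℕ) [NeZero n]
    (α : F) (hα : IsPrimitiveRoot α n)
    (m : ℕ) (hmn : m ∣ n)
    (D : Submodule F (Fin n → F)) (hcyc : IsCyclicCode D)
    (l t : ℤ)
    (hdisj : Disjoint (coset α n l m) (definingSet D))
    (hin : ∀ s : ℕ, 1 ≤ s → s ≤ m - 1 → α ^ ((s : ℤ) + l + t * m) ∈ definingSet D) :
    minDist D = m := by
  obtain ⟨u, hn⟩ := hmn
  obtain ⟨hm, hu⟩ := CanonicallyOrderedAdd.mul_pos.mp (hn ▸ NeZero.pos n)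
  have hα0 : α ≠ 0 := hα.ne_zero (NeZero.ne n)
  refine minDist_eq_of_forall_le_hwt (c := multiplesWord n u (α ^ l)⁻¹) ?_
    (hwt_multiplesWord hn hu (inv_ne_zero (zpow_ne_zero l hα0))) hm fun c hc hc0 => ?_
  · rw [← hcyc.codeOfZeros_definingSet hα]
    refine mem_codeOfZeros.mpr fun β hβ => evalWord_multiplesWord_eq_zero hn hu
      (zpow_inv_mul_pow_eq_one hα.pow_eq_one hβ.1 l) fun h => ?_
    exact hdisj.ne_of_mem (mem_coset_of_pow_eq_one hα hn hβ.1 h) hβ rfl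
  · suffices m - 1 < hwt c by omega
    refine lt_hwt_of_evalWord_eq_zero hα (zpow_ne_zero (l + t * m + 1) hα0) hc0 fun s hs => ?_
    have hzero := (mem_definingSet.mp (hin (s + 1) (by omega) (by omega))).2 c hc
    rwa [Nat.cast_succ, show (s : ℤ) + 1 + l + t * m = l + t * m + 1 + s by ring,
      zpow_add₀ hα0, zpow_natCast] at hzero

/-- if some coset `α^l G_m` is disjoint from the defining set, and the defining
set contains `α^{s+l+tm}` for `s = 1,…,m−1`, then the minimum distance is exactly `m`. -/
theorem stmt14 {F : Type*} [Field F] [Fintype F] (q n : ℕ) [NeZero n]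
    (hq : Fintype.card F = q) (hq2 : ∃ e : ℕ, 0 < e ∧ q = 2 ^ e) (hn : n ∣ q - 1)
    (α : F) (hα : IsPrimitiveRoot α n)
    (m : ℕ) (hm : 0 < m) (hmn : m ∣ n)
    (D : Submodule F (Fin n → F)) (hcyc : IsCyclicCode D) (hD : D ≠ ⊥)
    (l t : ℤ)
    (hdisj : Disjoint (coset α n l m) (definingSet D))
    (hin : ∀ s : ℕ, 1 ≤ s → s ≤ m - 1 → α ^ ((s : ℤ) + l + t * m) ∈ definingSet D) :
    minDist D = m :=
  stmt14_general n α hα m hmn D hcyc l t hdisj hin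

end LRC
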